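/- arXiv:2302.00213 — 4 statements merged into one kernel-verified Lean document; each statement's English description precedes it below -/
import Mathlib

section
/- Let $w : S \to [0,1]$ on a finite set $S$ with $\sum_{h \in S'} w_h \geq 1$ for a subset $S' \subseteq S$ with $|S'| \leq |S|$, and suppose $|S| \geq 3$. Then there exists an integer $s$ with $2^{-s} \geq 1/|S|^2$ such that the bucket $\{h \in S' : 2^{-s} \leq w_h \leq 2^{-(s-1)}\}$ has cardinality at least $1/(6 \cdot 2^{-s} \log_2 |S|)$. -/
/-!
Elements of weight at most `2^{-m} ≈ 1/|S|²` carry total weight at most `|S'| 2^{-m} ≤ 2/|S|`.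
Every heavier element lies in one of the `m ≤ 2 log₂ |S|` buckets `s = 1, …, m`, and bucket `s`
carries weight at most `2^{1-s}` times its cardinality. Hence some bucket `B_s` has
`2^{1-s} |B_s| ≥ (1 - 2/|S|) / m ≥ 1/(3 log₂ |S|)` once `|S| ≥ 6`. For `|S| ≤ 5` the bucket of an
element of weight at least `1/|S'|` suffices on its own, since `|S|/3 ≤ log₂ |S|` there.
-/

open Finset

noncomputable def dyadicBucket {α : Type*} (T : Finset α) (w : α → ℝ) (s : ℤ) : Finset α :=
  T.filter fun h => (2 : ℝ) ^ (-s) ≤ w h ∧ w h ≤ (2 : ℝ) ^ (-(s - 1))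

noncomputable def dyadicScale (x : ℝ) : ℤ := 1 - Int.clog 2 x

lemma two_zpow_neg_sub_one (s : ℤ) : (2 : ℝ) ^ (-(s - 1)) = 2 * 2 ^ (-s) := by
  rw [neg_sub', sub_neg_eq_add, zpow_add_one₀ two_ne_zero, mul_comm]

section dyadicScale

variable {x : ℝ}

lemma zpow_neg_dyadicScale_lt (hx : 0 < x) : (2 : ℝ) ^ (-dyadicScale x) < x := by
  simpa [dyadicScale] using Int.zpow_pred_clog_lt_self (R := ℝ) one_lt_two hx

lemma le_zpow_neg_dyadicScale_sub_one (x : ℝ) : x ≤ (2 : ℝ) ^ (-(dyadicScale x - 1)) := by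
  simpa [dyadicScale] using Int.self_le_zpow_clog (R := ℝ) one_lt_two x

lemma one_le_dyadicScale (hx : 0 < x) (hx1 : x ≤ 1) : 1 ≤ dyadicScale x := by
  have : Int.clog 2 x ≤ 0 := (Int.le_zpow_iff_clog_le one_lt_two hx).1 (by simpa using hx1)
  simp only [dyadicScale]
  omega

lemma dyadicScale_le {m : ℤ} (hx : (2 : ℝ) ^ (-m) < x) : dyadicScale x ≤ m := by
  have : -m < Int.clog 2 x :=
    (Int.zpow_lt_iff_lt_clog one_lt_two ((zpow_pos two_pos _).trans hx)).1 (by simpa using hx)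
  simp only [dyadicScale]
  omega

lemma mem_dyadicBucket_dyadicScale {α : Type*} {T : Finset α} {w : α → ℝ} {a : α} (ha : a ∈ T)
    (hwa : 0 < w a) : a ∈ dyadicBucket T w (dyadicScale (w a)) :=
  mem_filter.2 ⟨ha, (zpow_neg_dyadicScale_lt hwa).le, le_zpow_neg_dyadicScale_sub_one _⟩

end dyadicScale

lemma natCast_div_three_le_logb_two {N : ℕ} (h2 : 2 ≤ N) (h9 : N ≤ 9) :
    (N : ℝ) / 3 ≤ Real.logb 2 N := by
  have hpow : 2 ^ N ≤ N ^ 3 := by interval_cases N <;> norm_num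
  have : (N : ℝ) ≤ Real.logb 2 ((N : ℝ) ^ 3) := by
    rw [Real.le_logb_iff_rpow_le one_lt_two (by positivity), Real.rpow_natCast]
    exact_mod_cast hpow
  rw [Real.logb_pow] at this
  push_cast at this
  linarith

section buckets

variable {α : Type*} (T : Finset α) (w : α → ℝ)

lemma sum_le_card_mul_add_sum_card_dyadicBucket (hw1 : ∀ h ∈ T, w h ≤ 1) (m : ℤ) :
    ∑ h ∈ T, w h ≤ #T * (2 : ℝ) ^ (-m) +
      ∑ s ∈ Icc 1 m, #(dyadicBucket T w s) * (2 : ℝ) ^ (-(s - 1)) := by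
  rw [← sum_filter_add_sum_filter_not T (fun h => w h ≤ (2 : ℝ) ^ (-m))]
  gcongr ?_ + ?_
  · calc ∑ h ∈ T with w h ≤ (2 : ℝ) ^ (-m), w h
        ≤ #(T.filter fun h => w h ≤ (2 : ℝ) ^ (-m)) * (2 : ℝ) ^ (-m) := by
          simpa using sum_le_card_nsmul _ w _ fun h hh => (mem_filter.1 hh).2
      _ ≤ #T * (2 : ℝ) ^ (-m) := by gcongr; exact filter_subset _ _
  · set H := T.filter fun h => ¬ w h ≤ (2 : ℝ) ^ (-m)
    have hH : ∀ h ∈ H, dyadicScale (w h) ∈ Icc 1 m := fun h hh => by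
      obtain ⟨hT, hh⟩ := mem_filter.1 hh
      have hpos : 0 < w h := (zpow_pos two_pos _).trans (not_le.1 hh)
      exact mem_Icc.2 ⟨one_le_dyadicScale hpos (hw1 h hT), dyadicScale_le (not_le.1 hh)⟩
    rw [← sum_fiberwise_of_maps_to hH]
    gcongr with s
    have hfiber : {h ∈ H | dyadicScale (w h) = s} ⊆ dyadicBucket T w s := fun h hh => by
      obtain ⟨hhH, rfl⟩ := mem_filter.1 hh
      obtain ⟨hT, hh⟩ := mem_filter.1 hhH
      exact mem_dyadicBucket_dyadicScale hT ((zpow_pos two_pos _).trans (not_le.1 hh))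
    calc ∑ h ∈ H with dyadicScale (w h) = s, w h
        ≤ #(H.filter fun h => dyadicScale (w h) = s) * (2 : ℝ) ^ (-(s - 1)) := by
          simpa using sum_le_card_nsmul _ w _ fun h hh => (mem_filter.1 (hfiber hh)).2.2
      _ ≤ #(dyadicBucket T w s) * (2 : ℝ) ^ (-(s - 1)) := by gcongr

lemma exists_le_card_mul_dyadicBucket (hw1 : ∀ h ∈ T, w h ≤ 1) (hT : 1 ≤ ∑ h ∈ T, w h)
    {m : ℕ} (hm : 0 < m) {c : ℝ} (hc : m * c + #T * (2 : ℝ) ^ (-(m : ℤ)) ≤ 1) :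
    ∃ s ∈ Icc (1 : ℤ) m, c ≤ #(dyadicBucket T w s) * (2 : ℝ) ^ (-(s - 1)) := by
  refine exists_le_of_sum_le (nonempty_Icc.2 (by omega)) ?_
  have := sum_le_card_mul_add_sum_card_dyadicBucket T w hw1 m
  simp only [sum_const, Int.card_Icc, add_sub_cancel_right, Int.toNat_natCast, nsmul_eq_mul]
  linarith

lemma exists_nonempty_dyadicBucket (hw1 : ∀ h ∈ T, w h ≤ 1) (hT : 1 ≤ ∑ h ∈ T, w h) :
    ∃ s : ℤ, 1 ≤ s ∧ 1 / (2 * #T) ≤ (2 : ℝ) ^ (-s) ∧ (dyadicBucket T w s).Nonempty := by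
  have hTne : T.Nonempty := nonempty_of_sum_ne_zero (f := w) (by linarith)
  have hcard : (0 : ℝ) < #T := by exact_mod_cast hTne.card_pos
  obtain ⟨a, ha, hwa⟩ : ∃ a ∈ T, 1 / (#T : ℝ) ≤ w a := by
    refine exists_le_of_sum_le hTne ?_
    rwa [sum_const, nsmul_eq_mul, mul_one_div_cancel hcard.ne']
  have hwa0 : 0 < w a := (by positivity : (0 : ℝ) < 1 / #T).trans_le hwa
  refine ⟨dyadicScale (w a), one_le_dyadicScale hwa0 (hw1 a ha), ?_,
    a, mem_dyadicBucket_dyadicScale ha hwa0⟩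
  have := le_zpow_neg_dyadicScale_sub_one (w a)
  rw [two_zpow_neg_sub_one] at this
  calc 1 / (2 * (#T : ℝ)) = 1 / #T / 2 := by ring
    _ ≤ _ := by linarith

lemma exists_dyadicBucket_of_le_nine (hw1 : ∀ h ∈ T, w h ≤ 1) (hT : 1 ≤ ∑ h ∈ T, w h)
    {N : ℕ} (hTN : #T ≤ N) (h2 : 2 ≤ N) (h9 : N ≤ 9) :
    ∃ s : ℕ, 1 / (N : ℝ) ^ 2 ≤ (2 : ℝ) ^ (-(s : ℤ)) ∧
      1 / (6 * (2 : ℝ) ^ (-(s : ℤ)) * Real.logb 2 N) ≤ #(dyadicBucket T w s) := by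
  obtain ⟨s, hs1, hsT, hne⟩ := exists_nonempty_dyadicBucket T w hw1 hT
  lift s to ℕ using (by omega)
  have hTpos : (0 : ℝ) < #T := by
    exact_mod_cast (hne.mono (filter_subset _ _)).card_pos
  have hN : (2 : ℝ) ≤ N := by exact_mod_cast h2
  have hL : 0 < Real.logb 2 N := Real.logb_pos one_lt_two (by linarith)
  have hscale : 1 / (2 * (N : ℝ)) ≤ (2 : ℝ) ^ (-(s : ℤ)) :=
    hsT.trans' (one_div_le_one_div_of_le (by positivity) (by gcongr))
  refine ⟨s, hscale.trans' (one_div_le_one_div_of_le (by positivity) (by nlinarith)), ?_⟩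
  have hlog := natCast_div_three_le_logb_two h2 h9
  calc 1 / (6 * (2 : ℝ) ^ (-(s : ℤ)) * Real.logb 2 N) ≤ 1 := by
        rw [div_le_one (by positivity)]
        calc (1 : ℝ) = 6 * (1 / (2 * N)) * (N / 3) := by field_simp; ring
          _ ≤ 6 * (2 : ℝ) ^ (-(s : ℤ)) * Real.logb 2 N := by gcongr
    _ ≤ #(dyadicBucket T w s) := by exact_mod_cast hne.card_pos

lemma exists_dyadicBucket_of_six_le (hw1 : ∀ h ∈ T, w h ≤ 1) (hT : 1 ≤ ∑ h ∈ T, w h)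
    {N : ℕ} (hTN : #T ≤ N) (h6 : 6 ≤ N) :
    ∃ s : ℕ, 1 / (N : ℝ) ^ 2 ≤ (2 : ℝ) ^ (-(s : ℤ)) ∧
      1 / (6 * (2 : ℝ) ^ (-(s : ℤ)) * Real.logb 2 N) ≤ #(dyadicBucket T w s) := by
  set m := Nat.log 2 (N ^ 2)
  have hm_le : 2 ^ m ≤ N ^ 2 := Nat.pow_log_le_self 2 (by positivity)
  have hlt_m : N ^ 2 < 2 ^ (m + 1) := Nat.lt_pow_succ_log_self one_lt_two _
  have hm_pos : 0 < m := Nat.log_pos one_lt_two (by nlinarith)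
  have hm_logb : (m : ℝ) ≤ 2 * Real.logb 2 N := by
    have := Real.natLog_le_logb (N ^ 2) 2
    push_cast at this
    rwa [Real.logb_pow] at this
  have hN : (6 : ℝ) ≤ N := by exact_mod_cast h6
  have hL : 0 < Real.logb 2 N := Real.logb_pos one_lt_two (by linarith)
  have hscale : 1 / (N : ℝ) ^ 2 ≤ (2 : ℝ) ^ (-(m : ℤ)) := by
    rw [zpow_neg, zpow_natCast, one_div]
    gcongr
    exact_mod_cast hm_le
  have hlight : #T * (2 : ℝ) ^ (-(m : ℤ)) ≤ 1 / 3 := by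
    have h2m : (N : ℝ) ^ 2 * (2 : ℝ) ^ (-(m : ℤ)) ≤ 2 := by
      have : (N : ℝ) ^ 2 ≤ 2 ^ (m + 1) := by exact_mod_cast hlt_m.le
      rw [zpow_neg, zpow_natCast, ← div_eq_mul_inv, div_le_iff₀ (by positivity)]
      linarith [pow_succ (2 : ℝ) m]
    have hx := zpow_pos (two_pos : (0 : ℝ) < 2) (-(m : ℤ))
    calc #T * (2 : ℝ) ^ (-(m : ℤ)) ≤ N * (2 : ℝ) ^ (-(m : ℤ)) := by gcongr
      _ ≤ 1 / 3 := by nlinarith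
  obtain ⟨s, hs, hc⟩ := exists_le_card_mul_dyadicBucket T w hw1 hT hm_pos
    (c := 1 / (3 * Real.logb 2 N)) (by
      have : (m : ℝ) * (1 / (3 * Real.logb 2 N)) ≤ 2 / 3 := by
        rw [mul_one_div, div_le_iff₀ (by positivity)]; linarith
      linarith)
  obtain ⟨hs1, hsm⟩ := mem_Icc.1 hs
  lift s to ℕ using (by omega)
  refine ⟨s, hscale.trans (zpow_le_zpow_right₀ one_le_two (by omega)), ?_⟩
  rw [two_zpow_neg_sub_one] at hc
  calc 1 / (6 * (2 : ℝ) ^ (-(s : ℤ)) * Real.logb 2 N)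
      = 1 / (3 * Real.logb 2 N) / (2 * (2 : ℝ) ^ (-(s : ℤ))) := by field_simp; ring
    _ ≤ #(dyadicBucket T w s) := by rw [div_le_iff₀ (by positivity)]; linarith

end buckets

theorem stmt_4_general (S : Type*) [Fintype S]
    (w : S → ℝ) (hw1 : ∀ h, w h ≤ 1)
    (S' : Finset S) (hS' : (1 : ℝ) ≤ ∑ h ∈ S', w h)
    (hS : 3 ≤ Fintype.card S) :
    ∃ s : ℕ,
      (1 : ℝ) / (Fintype.card S : ℝ) ^ 2 ≤ (2 : ℝ) ^ (-(s : ℤ)) ∧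
      (1 : ℝ) / (6 * (2 : ℝ) ^ (-(s : ℤ)) * Real.logb 2 (Fintype.card S)) ≤
        ((S'.filter (fun h => (2 : ℝ) ^ (-(s : ℤ)) ≤ w h ∧
            w h ≤ (2 : ℝ) ^ (-((s : ℤ) - 1)))).card : ℝ) := by
  have hS'N : #S' ≤ Fintype.card S := card_le_univ S'
  rcases le_or_gt (Fintype.card S) 5 with h5 | h6
  · exact exists_dyadicBucket_of_le_nine S' w (fun h _ => hw1 h) hS' hS'N (by omega) (by omega)
  · exact exists_dyadicBucket_of_six_le S' w (fun h _ => hw1 h) hS' hS'N h6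

/-- Bucketing with a cardinality bound: if `w : S → [0,1]` has weight at least `1` on a
subset `S'` and `|S| ≥ 3`, then there is a dyadic scale `2^{-s} ≥ 1/|S|²` whose bucket in
`S'` has cardinality at least `1/(6 · 2^{-s} · log₂ |S|)`. -/
theorem stmt_4 (S : Type*) [Fintype S] [DecidableEq S]
    (w : S → ℝ) (hw0 : ∀ h, 0 ≤ w h) (hw1 : ∀ h, w h ≤ 1)
    (S' : Finset S) (hS' : (1 : ℝ) ≤ ∑ h ∈ S', w h)
    (hS : 3 ≤ Fintype.card S) :
    ∃ s : ℕ,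
      (1 : ℝ) / (Fintype.card S : ℝ) ^ 2 ≤ (2 : ℝ) ^ (-(s : ℤ)) ∧
      (1 : ℝ) / (6 * (2 : ℝ) ^ (-(s : ℤ)) * Real.logb 2 (Fintype.card S)) ≤
        ((S'.filter (fun h => (2 : ℝ) ^ (-(s : ℤ)) ≤ w h ∧
            w h ≤ (2 : ℝ) ^ (-((s : ℤ) - 1)))).card : ℝ) :=
  stmt_4_general S w hw1 S' hS' hS
end

section
/- Under the hypotheses of the previous claim (constraints (i) with constant $C$, (ii) with parameter $\Delta$, and additionally $\sum_{\ell \in B} z_\ell \geq |B|/K$ for some $K > 0$ and $z_\ell \leq 1$ for all $\ell$), for any subset $\hat{J} \subseteq J$, the blue neighborhood satisfies $|\Gamma_B(\hat{J})| \geq \frac{1}{2CK} \cdot \frac{x(\hat{J})}{x(J)} \cdot |B|$, where $x(T) = \sum_{j \in T} x_j$ (assume $x(J) > 0$). -/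
open Finset
open scoped Classical

/-!
Every blue vertex adjacent to `Ĵ` carries at most `C z_ℓ ≤ C` of the edge weight, while each
`j ∈ Ĵ` receives at least `Δ x_j`, so `Δ x(Ĵ) ≤ C |Γ_B(Ĵ)|`. Counting all the edge weight the other
way, `|B| / K ≤ z(B) ≤ 2 Δ x(J)`, and eliminating `Δ` between the two bounds gives the claim.
-/

section BipartiteWeights

variable {B J : Type*} [Fintype B] [Fintype J] (Adj : B → J → Prop) (w : B → J → ℝ)

theorem sum_sum_filter_adj_comm :
    ∑ j, ∑ ℓ ∈ univ.filter (Adj · j), w ℓ j = ∑ ℓ, ∑ j ∈ univ.filter (Adj ℓ), w ℓ j :=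
  Finset.sum_comm' fun j ℓ => by simp

theorem sum_sum_filter_adj_le_sum_nbhd (hw : ∀ ℓ j, 0 ≤ w ℓ j) (T : Finset J) :
    ∑ j ∈ T, ∑ ℓ ∈ univ.filter (Adj · j), w ℓ j ≤
      ∑ ℓ ∈ univ.filter (fun ℓ => ∃ j ∈ T, Adj ℓ j), ∑ j ∈ univ.filter (Adj ℓ), w ℓ j := by
  rw [Finset.sum_comm' (t' := univ.filter fun ℓ => ∃ j ∈ T, Adj ℓ j)
    (s' := fun ℓ => T.filter (Adj ℓ)) fun j ℓ => by
    simp only [mem_filter, mem_univ, true_and]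
    exact ⟨fun h => ⟨h, j, h⟩, And.left⟩]
  refine sum_le_sum fun ℓ _ => sum_le_sum_of_subset_of_nonneg ?_ fun j _ _ => hw ℓ j
  exact filter_subset_filter _ (subset_univ T)

variable {Adj w} {z : B → ℝ} {x : J → ℝ} {C Δ : ℝ}

theorem mul_sum_le_mul_card_nbhd (hC : 0 < C) (hz1 : ∀ ℓ, z ℓ ≤ 1) (hw : ∀ ℓ j, 0 ≤ w ℓ j)
    (hupper : ∀ ℓ, ∑ j ∈ univ.filter (Adj ℓ), w ℓ j ≤ C * z ℓ)
    (hlower : ∀ j, Δ * x j ≤ ∑ ℓ ∈ univ.filter (Adj · j), w ℓ j) (T : Finset J) :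
    Δ * ∑ j ∈ T, x j ≤ C * #(univ.filter fun ℓ => ∃ j ∈ T, Adj ℓ j) := by
  calc Δ * ∑ j ∈ T, x j
      ≤ ∑ j ∈ T, ∑ ℓ ∈ univ.filter (Adj · j), w ℓ j := by
        rw [mul_sum]; exact sum_le_sum fun j _ => hlower j
    _ ≤ ∑ ℓ ∈ univ.filter (fun ℓ => ∃ j ∈ T, Adj ℓ j), ∑ j ∈ univ.filter (Adj ℓ), w ℓ j :=
        sum_sum_filter_adj_le_sum_nbhd Adj w hw T
    _ ≤ ∑ ℓ ∈ univ.filter (fun ℓ => ∃ j ∈ T, Adj ℓ j), C := by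
        refine sum_le_sum fun ℓ _ => (hupper ℓ).trans ?_
        simpa using mul_le_mul_of_nonneg_left (hz1 ℓ) hC.le
    _ = C * #(univ.filter fun ℓ => ∃ j ∈ T, Adj ℓ j) := by
        rw [sum_const, nsmul_eq_mul, mul_comm]

theorem sum_le_two_mul_mul_sum (hlower : ∀ ℓ, z ℓ ≤ ∑ j ∈ univ.filter (Adj ℓ), w ℓ j)
    (hupper : ∀ j, ∑ ℓ ∈ univ.filter (Adj · j), w ℓ j ≤ 2 * Δ * x j) :
    ∑ ℓ, z ℓ ≤ 2 * Δ * ∑ j, x j :=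
  calc ∑ ℓ, z ℓ ≤ ∑ ℓ, ∑ j ∈ univ.filter (Adj ℓ), w ℓ j := sum_le_sum fun ℓ _ => hlower ℓ
    _ = ∑ j, ∑ ℓ ∈ univ.filter (Adj · j), w ℓ j := (sum_sum_filter_adj_comm Adj w).symm
    _ ≤ 2 * Δ * ∑ j, x j := by rw [mul_sum]; exact sum_le_sum fun j _ => hupper j

end BipartiteWeights

theorem stmt_6_general (B J : Type*) [Fintype B] [Fintype J]
    (Adj : B → J → Prop)
    (z : B → ℝ) (x : J → ℝ) (xe : B → J → ℝ)
    (C Δ K : ℝ) (hC : 0 < C) (hK : 0 < K)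
    (hz1 : ∀ ℓ, z ℓ ≤ 1)
    (hx0 : ∀ j, 0 ≤ x j)
    (hxe0 : ∀ ℓ j, 0 ≤ xe ℓ j)
    (hℓ : ∀ ℓ : B,
      z ℓ ≤ ∑ j ∈ Finset.univ.filter (fun j => Adj ℓ j), xe ℓ j ∧
      ∑ j ∈ Finset.univ.filter (fun j => Adj ℓ j), xe ℓ j ≤ C * z ℓ)
    (hj : ∀ j : J,
      Δ * x j ≤ ∑ ℓ ∈ Finset.univ.filter (fun ℓ => Adj ℓ j), xe ℓ j ∧
      ∑ ℓ ∈ Finset.univ.filter (fun ℓ => Adj ℓ j), xe ℓ j ≤ 2 * Δ * x j)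
    (hzB : (Fintype.card B : ℝ) / K ≤ ∑ ℓ, z ℓ)
    (hxJ : 0 < ∑ j, x j)
    (Jhat : Finset J) :
    (1 / (2 * C * K)) * ((∑ j ∈ Jhat, x j) / (∑ j, x j)) * (Fintype.card B : ℝ) ≤
      ((Finset.univ.filter (fun ℓ : B => ∃ j ∈ Jhat, Adj ℓ j)).card : ℝ) := by
  have hnbhd := mul_sum_le_mul_card_nbhd hC hz1 hxe0 (fun ℓ => (hℓ ℓ).2) (fun j => (hj j).1) Jhat
  have hcard : (Fintype.card B : ℝ) ≤ 2 * Δ * K * ∑ j, x j := by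
    have := hzB.trans (sum_le_two_mul_mul_sum (fun ℓ => (hℓ ℓ).1) fun j => (hj j).2)
    rw [div_le_iff₀ hK] at this
    linarith
  have hJhat : 0 ≤ ∑ j ∈ Jhat, x j := sum_nonneg fun j _ => hx0 j
  rw [show (1 / (2 * C * K)) * ((∑ j ∈ Jhat, x j) / (∑ j, x j)) * (Fintype.card B : ℝ)
      = (∑ j ∈ Jhat, x j) * Fintype.card B / (2 * C * K * ∑ j, x j) by field_simp,
    div_le_iff₀ (by positivity)]
  nlinarith [mul_le_mul_of_nonneg_left hnbhd (by positivity : 0 ≤ 2 * K * ∑ j, x j),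
    mul_le_mul_of_nonneg_left hcard hJhat]

/-- Blue-neighborhood lower bound: under the LP constraints with constant `C` and
parameter `Δ`, if additionally `∑ z ≥ |B|/K`, then for any `Jhat ⊆ J` the blue neighborhood
satisfies `|Γ_B(Jhat)| ≥ (1/(2CK)) · (x(Jhat)/x(J)) · |B|`. -/
theorem stmt_6 (B J : Type*) [Fintype B] [Fintype J]
    (Adj : B → J → Prop)
    (z : B → ℝ) (x : J → ℝ) (xe : B → J → ℝ)
    (C Δ K : ℝ) (hC : 0 < C) (hΔ : 0 < Δ) (hK : 0 < K)
    (hz0 : ∀ ℓ, 0 ≤ z ℓ) (hz1 : ∀ ℓ, z ℓ ≤ 1)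
    (hx0 : ∀ j, 0 ≤ x j) (hx1 : ∀ j, x j ≤ 1)
    (hxe0 : ∀ ℓ j, 0 ≤ xe ℓ j)
    (hxe_edge : ∀ ℓ j, ¬ Adj ℓ j → xe ℓ j = 0)
    (hℓ : ∀ ℓ : B,
      z ℓ ≤ ∑ j ∈ Finset.univ.filter (fun j => Adj ℓ j), xe ℓ j ∧
      ∑ j ∈ Finset.univ.filter (fun j => Adj ℓ j), xe ℓ j ≤ C * z ℓ)
    (hj : ∀ j : J,
      Δ * x j ≤ ∑ ℓ ∈ Finset.univ.filter (fun ℓ => Adj ℓ j), xe ℓ j ∧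
      ∑ ℓ ∈ Finset.univ.filter (fun ℓ => Adj ℓ j), xe ℓ j ≤ 2 * Δ * x j)
    (hzB : (Fintype.card B : ℝ) / K ≤ ∑ ℓ, z ℓ)
    (hxJ : 0 < ∑ j, x j)
    (Jhat : Finset J) :
    (1 / (2 * C * K)) * ((∑ j ∈ Jhat, x j) / (∑ j, x j)) * (Fintype.card B : ℝ) ≤
      ((Finset.univ.filter (fun ℓ : B => ∃ j ∈ Jhat, Adj ℓ j)).card : ℝ) :=
  stmt_6_general B J Adj z x xe C Δ K hC hK hz1 hx0 hxe0 hℓ hj hzB hxJ Jhat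
end

section
/- Under the same LP constraints with constant $C$ and parameter $\Delta$, and with $\sum_{\ell \in B} z_\ell \geq |B|/K$, for any $\hat{J} \subseteq J$ with $x(\hat J) > 0$, at least $\varepsilon |B|$ elements $\ell \in B$ satisfy $\sum_{j \in \Gamma_{\hat{J}}(\ell)} x^{\ell}_j \geq \frac{1}{4K} \cdot \frac{x(\hat{J})}{x(J)}$, where $\varepsilon = \frac{1}{4CK} \cdot \frac{x(\hat{J})}{x(J)}$. -/
/-!
Double counting the edge weights gives `|B|/K ≤ ∑ z ≤ 2Δ·x(J)` and `Δ·x(Ĵ) ≤ ∑_ℓ m(ℓ)`, where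
`m(ℓ)` is the `Ĵ`-mass of `ℓ`; hence `∑_ℓ m(ℓ) ≥ 2|B|t` for the threshold `t = x(Ĵ)/(4K·x(J))`.
Since `m(ℓ) ≤ C z_ℓ ≤ C`, the elements below the threshold contribute at most `|B|t`, so those
above it contribute at least `|B|t` and there are at least `|B|t/C` of them.
-/

open Finset
open scoped Classical

theorem Finset.sum_le_card_filter_nsmul_add_card_nsmul {ι M : Type*} [AddCommMonoid M]
    [LinearOrder M] [IsOrderedAddMonoid M] (s : Finset ι) (f : ι → M) {m t : M}
    (hf : ∀ i ∈ s, f i ≤ m) (ht : 0 ≤ t) :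
    ∑ i ∈ s, f i ≤ #{i ∈ s | t ≤ f i} • m + #s • t := by
  rw [← sum_filter_add_sum_filter_not s (fun i => t ≤ f i)]
  gcongr
  · exact sum_le_card_nsmul _ _ _ fun i hi => hf i (mem_filter.mp hi).1
  · calc ∑ i ∈ s with ¬t ≤ f i, f i ≤ #{i ∈ s | ¬t ≤ f i} • t :=
          sum_le_card_nsmul _ _ _ fun i hi => (not_le.mp (mem_filter.mp hi).2).le
      _ ≤ #s • t := nsmul_le_nsmul_left ht (card_filter_le _ _)

section BipartiteMass

variable {B J : Type*} [Fintype B] {Adj : B → J → Prop} {xe : B → J → ℝ}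

theorem mul_sum_le_sum_sum_filter {x : J → ℝ} {c : ℝ} (s : Finset J)
    (hj : ∀ j, c * x j ≤ ∑ ℓ ∈ univ.filter (fun ℓ => Adj ℓ j), xe ℓ j) :
    c * ∑ j ∈ s, x j ≤ ∑ ℓ, ∑ j ∈ s.filter (fun j => Adj ℓ j), xe ℓ j :=
  calc c * ∑ j ∈ s, x j ≤ ∑ j ∈ s, ∑ ℓ ∈ univ.filter (fun ℓ => Adj ℓ j), xe ℓ j := by
        rw [mul_sum]; exact sum_le_sum fun j _ => hj j
    _ = _ := (sum_sum_bipartiteAbove_eq_sum_sum_bipartiteBelow Adj xe).symm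

theorem sum_le_mul_sum_of_edge_bounds [Fintype J] {z : B → ℝ} {x : J → ℝ} {c : ℝ}
    (hℓ : ∀ ℓ, z ℓ ≤ ∑ j ∈ univ.filter (fun j => Adj ℓ j), xe ℓ j)
    (hj : ∀ j, ∑ ℓ ∈ univ.filter (fun ℓ => Adj ℓ j), xe ℓ j ≤ c * x j) :
    ∑ ℓ, z ℓ ≤ c * ∑ j, x j :=
  calc ∑ ℓ, z ℓ ≤ ∑ ℓ, ∑ j ∈ univ.filter (fun j => Adj ℓ j), xe ℓ j :=
        sum_le_sum fun ℓ _ => hℓ ℓ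
    _ = ∑ j, ∑ ℓ ∈ univ.filter (fun ℓ => Adj ℓ j), xe ℓ j :=
        sum_sum_bipartiteAbove_eq_sum_sum_bipartiteBelow Adj xe
    _ ≤ c * ∑ j, x j := by rw [mul_sum]; exact sum_le_sum fun j _ => hj j

end BipartiteMass

theorem stmt_7_general (B J : Type*) [Fintype B] [Fintype J]
    (Adj : B → J → Prop)
    (z : B → ℝ) (x : J → ℝ) (xe : B → J → ℝ)
    (C Δ K : ℝ) (hC : 0 < C) (hK : 0 < K)
    (hz1 : ∀ ℓ, z ℓ ≤ 1)
    (hx0 : ∀ j, 0 ≤ x j)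
    (hxe0 : ∀ ℓ j, 0 ≤ xe ℓ j)
    (hℓ : ∀ ℓ : B,
      z ℓ ≤ ∑ j ∈ Finset.univ.filter (fun j => Adj ℓ j), xe ℓ j ∧
      ∑ j ∈ Finset.univ.filter (fun j => Adj ℓ j), xe ℓ j ≤ C * z ℓ)
    (hj : ∀ j : J,
      Δ * x j ≤ ∑ ℓ ∈ Finset.univ.filter (fun ℓ => Adj ℓ j), xe ℓ j ∧
      ∑ ℓ ∈ Finset.univ.filter (fun ℓ => Adj ℓ j), xe ℓ j ≤ 2 * Δ * x j)
    (hzB : (Fintype.card B : ℝ) / K ≤ ∑ ℓ, z ℓ)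
    (Jhat : Finset J) (hJhat : 0 < ∑ j ∈ Jhat, x j) :
    (1 / (4 * C * K)) * ((∑ j ∈ Jhat, x j) / (∑ j, x j)) * (Fintype.card B : ℝ) ≤
      ((Finset.univ.filter (fun ℓ : B =>
          (1 / (4 * K)) * ((∑ j ∈ Jhat, x j) / (∑ j, x j)) ≤
            ∑ j ∈ Jhat.filter (fun j => Adj ℓ j), xe ℓ j)).card : ℝ) := by
  have hxJ : 0 < ∑ j, x j := hJhat.trans_le (sum_le_univ_sum_of_nonneg hx0)
  set r := (∑ j ∈ Jhat, x j) / ∑ j, x j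
  set t := 1 / (4 * K) * r
  have hmass :
      2 * (Fintype.card B * t) ≤ ∑ ℓ, ∑ j ∈ Jhat.filter (fun j => Adj ℓ j), xe ℓ j :=
    calc 2 * (Fintype.card B * t) = Fintype.card B / K * r / 2 := by ring
      _ ≤ 2 * Δ * (∑ j, x j) * r / 2 := by
          gcongr
          exact hzB.trans
            (sum_le_mul_sum_of_edge_bounds (fun ℓ => (hℓ ℓ).1) (fun j => (hj j).2))
      _ = Δ * ∑ j ∈ Jhat, x j := by simp only [r]; field_simp
      _ ≤ _ := mul_sum_le_sum_sum_filter Jhat fun j => (hj j).1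
  have hbound : ∀ ℓ, ∑ j ∈ Jhat.filter (fun j => Adj ℓ j), xe ℓ j ≤ C := fun ℓ =>
    calc _ ≤ ∑ j ∈ univ.filter (fun j => Adj ℓ j), xe ℓ j :=
          sum_le_sum_of_subset_of_nonneg (filter_subset_filter _ (subset_univ _))
            fun j _ _ => hxe0 ℓ j
      _ ≤ C * z ℓ := (hℓ ℓ).2
      _ ≤ C := mul_le_of_le_one_right hC.le (hz1 ℓ)
  have hmarkov := sum_le_card_filter_nsmul_add_card_nsmul univ _ (fun ℓ _ => hbound ℓ)
    (by positivity : 0 ≤ t)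
  simp only [nsmul_eq_mul, card_univ] at hmarkov
  calc _ = Fintype.card B * t / C := by ring
    _ ≤ _ := by rw [div_le_iff₀ hC]; linarith

/-- Fractional covering: under the LP constraints with constant `C`, parameter `Δ`, and
`∑ z ≥ |B|/K`, for any `Ĵ ⊆ J` with positive weight, at least `ε|B|` blue elements `ℓ`
satisfy `∑_{j ∈ Γ_Ĵ(ℓ)} x^ℓ_j ≥ (1/4K)·x(Ĵ)/x(J)`, where `ε = (1/(4CK))·x(Ĵ)/x(J)`. -/
theorem stmt_7 (B J : Type*) [Fintype B] [Fintype J]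
    (Adj : B → J → Prop)
    (z : B → ℝ) (x : J → ℝ) (xe : B → J → ℝ)
    (C Δ K : ℝ) (hC : 0 < C) (hΔ : 0 < Δ) (hK : 0 < K)
    (hz0 : ∀ ℓ, 0 ≤ z ℓ) (hz1 : ∀ ℓ, z ℓ ≤ 1)
    (hx0 : ∀ j, 0 ≤ x j) (hx1 : ∀ j, x j ≤ 1)
    (hxe0 : ∀ ℓ j, 0 ≤ xe ℓ j)
    (hxe_edge : ∀ ℓ j, ¬ Adj ℓ j → xe ℓ j = 0)
    (hℓ : ∀ ℓ : B,
      z ℓ ≤ ∑ j ∈ Finset.univ.filter (fun j => Adj ℓ j), xe ℓ j ∧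
      ∑ j ∈ Finset.univ.filter (fun j => Adj ℓ j), xe ℓ j ≤ C * z ℓ)
    (hj : ∀ j : J,
      Δ * x j ≤ ∑ ℓ ∈ Finset.univ.filter (fun ℓ => Adj ℓ j), xe ℓ j ∧
      ∑ ℓ ∈ Finset.univ.filter (fun ℓ => Adj ℓ j), xe ℓ j ≤ 2 * Δ * x j)
    (hzB : (Fintype.card B : ℝ) / K ≤ ∑ ℓ, z ℓ)
    (Jhat : Finset J) (hJhat : 0 < ∑ j ∈ Jhat, x j) :
    (1 / (4 * C * K)) * ((∑ j ∈ Jhat, x j) / (∑ j, x j)) * (Fintype.card B : ℝ) ≤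
      ((Finset.univ.filter (fun ℓ : B =>
          (1 / (4 * K)) * ((∑ j ∈ Jhat, x j) / (∑ j, x j)) ≤
            ∑ j ∈ Jhat.filter (fun j => Adj ℓ j), xe ℓ j)).card : ℝ) :=
  stmt_7_general B J Adj z x xe C Δ K hC hK hz1 hx0 hxe0 hℓ hj hzB Jhat hJhat
end

section
/- Let $B_D \subseteq B$ be a set of $k' \leq k$ elements, each contained in between $D$ and $2D$ sets of a collection $J_0$ (where $k \geq 1$, $D \geq 1$). If every $j \in J_0$ is retained independently with probability $p = \min(1, \ln(2k)/D)$, then with positive probability, simultaneously every $\ell \in B_D$ retains at least one containing set and at most $2e\ln(2k)$ containing sets. -/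
open Finset MeasureTheory ProbabilityTheory Real
open scoped Classical ENNReal NNReal

/-! Fix `ℓ ∈ B_D` and let `A` be the `n ∈ [D, 2D]` indices `i` with `ℓ ∈ S i`. All of `A` is
deleted with probability `(1 - p) ^ n`, which is `0` if `p = 1` and at most
`exp (-p D) = 1 / (2k)` otherwise. By the exponential-moment (Chernoff) bound at `t = 1`, at least
`2e ln (2k)` indices of `A` survive with probability at most
`exp (p (e - 1) n - 2e ln (2k)) ≤ exp (-2 ln (2k))`, using `p n ≤ 2 ln (2k)`. A union bound over the
at most `k` elements of `B_D` leaves a failure probability of at most `1/2 + 1/(4k) < 1`. -/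

theorem measure_setOf_forall_pos_of_card_mul_lt_one {Ω α : Type*} [MeasurableSpace Ω]
    {μ : Measure Ω} [IsProbabilityMeasure μ] {s : Finset α} {P : α → Ω → Prop} {c : ℝ}
    (hc : ∀ a ∈ s, μ.real {x | ¬ P a x} ≤ c) (hsc : #s * c < 1) :
    0 < μ {x | ∀ a ∈ s, P a x} := by
  set G := {x | ∀ a ∈ s, P a x}
  have hGc : Gᶜ = ⋃ a ∈ s, {x | ¬ P a x} := by ext; simp [G]
  have hbad : μ.real Gᶜ < 1 := calc
    μ.real Gᶜ ≤ ∑ a ∈ s, μ.real {x | ¬ P a x} := hGc ▸ measureReal_biUnion_finset_le s _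
    _ ≤ #s * c := by simpa using sum_le_card_nsmul s _ c hc
    _ < 1 := hsc
  have hcover : 1 ≤ μ.real G + μ.real Gᶜ := by
    simpa using measureReal_union_le (μ := μ) G Gᶜ
  refine pos_iff_ne_zero.2 fun h0 => ?_
  have hG0 : μ.real G = 0 := by simp [measureReal_def, h0]
  linarith

theorem one_sub_min_div_pow_le_exp_neg {L D : ℝ} {n : ℕ} (hL : 0 ≤ L) (hD : 0 < D)
    (hn : D ≤ n) : (1 - min 1 (L / D)) ^ n ≤ exp (-L) := by
  rcases le_total 1 (L / D) with h | h
  · rw [min_eq_left h, sub_self, zero_pow (Nat.cast_pos.1 (hD.trans_le hn)).ne']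
    positivity
  · rw [min_eq_right h]
    calc (1 - L / D) ^ n ≤ exp (-(L / D)) ^ n :=
          pow_le_pow_left₀ (by linarith) (by linarith [add_one_le_exp (-(L / D))]) n
      _ = exp (-(L / D * n)) := by rw [← exp_nat_mul]; ring_nf
      _ ≤ exp (-(L / D * D)) := by gcongr
      _ = exp (-L) := by rw [div_mul_cancel₀ _ hD.ne']

noncomputable abbrev bernoulliPi (ι : Type*) [Fintype ι] (q : ℝ≥0) (hq : q ≤ 1) :
    Measure (ι → Bool) :=
  Measure.pi fun _ => (PMF.bernoulli q hq).toMeasure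

section BernoulliPi

variable {ι : Type*} [Fintype ι] {q : ℝ≥0} (hq : q ≤ 1)

theorem integral_bernoulliPi_prod (g : ι → Bool → ℝ) :
    ∫ x, ∏ i, g i (x i) ∂bernoulliPi ι q hq = ∏ i, ((1 - q) * g i false + q * g i true) := by
  rw [integral_fintype_prod_eq_prod]
  refine Finset.prod_congr rfl fun i _ => ?_
  simp [PMF.integral_eq_sum, PMF.bernoulli_apply, hq, add_comm]

theorem measureReal_bernoulliPi_forall_false (A : Finset ι) :
    (bernoulliPi ι q hq).real {x | ∀ i ∈ A, x i = false} = (1 - q) ^ #A := by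
  have hpi : {x : ι → Bool | ∀ i ∈ A, x i = false} =
      Set.univ.pi fun i => if i ∈ A then {false} else Set.univ := by
    ext x; simp only [Set.mem_pi]; grind
  rw [hpi, measureReal_def, Measure.pi_pi, ENNReal.toReal_prod]
  simp [apply_ite, PMF.bernoulli_apply, hq]

theorem mgf_bernoulliPi_card_filter (A : Finset ι) :
    mgf (fun x => (#{i ∈ A | x i = true} : ℝ)) (bernoulliPi ι q hq) 1 =
      (1 + q * (exp 1 - 1)) ^ #A := by
  set g : ι → Bool → ℝ := fun i b => if i ∈ A ∧ b = true then exp 1 else 1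
  have hexp (x : ι → Bool) : exp (1 * #{i ∈ A | x i = true}) = ∏ i, g i (x i) := by
    rw [Finset.prod_ite, prod_const, prod_const_one, mul_one, exp_one_pow, one_mul]
    congr 3; ext; simp
  simp only [mgf, hexp, integral_bernoulliPi_prod]
  calc ∏ i, ((1 - q) * g i false + q * g i true)
      = ∏ i, if i ∈ A then 1 + q * (exp 1 - 1) else 1 := by
        refine prod_congr rfl fun i _ => ?_
        split_ifs <;> simp [g, *]
        ring
    _ = _ := by rw [prod_ite_mem, univ_inter, prod_const]

theorem measureReal_bernoulliPi_le_card_filter_le (A : Finset ι) (m : ℝ) :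
    (bernoulliPi ι q hq).real {x | m ≤ #{i ∈ A | x i = true}} ≤
      exp (q * (exp 1 - 1) * #A - m) := by
  calc _ ≤ exp (-1 * m) * (1 + q * (exp 1 - 1)) ^ #A := by
        rw [← mgf_bernoulliPi_card_filter]
        exact measure_ge_le_exp_mul_mgf m zero_le_one (.of_finite)
    _ ≤ exp (-1 * m) * exp (q * (exp 1 - 1)) ^ #A := by
        have := one_le_exp (zero_le_one (α := ℝ))
        gcongr
        exact (add_comm _ _).trans_le (add_one_le_exp _)
    _ = _ := by rw [← exp_nat_mul, ← exp_add]; ring_nf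

theorem measureReal_bernoulliPi_card_filter_not_mem_le (A : Finset ι) {L D : ℝ} (hL : 0 ≤ L)
    (hD : 0 < D) (hqLD : (q : ℝ) = min 1 (L / D)) (hDA : D ≤ #A) (hAD : #A ≤ 2 * D) :
    (bernoulliPi ι q hq).real {x | ¬ (1 ≤ #{i ∈ A | x i = true} ∧
        (#{i ∈ A | x i = true} : ℝ) ≤ 2 * exp 1 * L)} ≤ exp (-L) + exp (-(2 * L)) := by
  have hsub : {x : ι → Bool | ¬ (1 ≤ #{i ∈ A | x i = true} ∧
        (#{i ∈ A | x i = true} : ℝ) ≤ 2 * exp 1 * L)} ⊆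
      {x | ∀ i ∈ A, x i = false} ∪ {x | 2 * exp 1 * L ≤ #{i ∈ A | x i = true}} := by
    intro x hx
    simp only [Set.mem_setOf_eq, not_and_or, not_le, Nat.lt_one_iff, card_eq_zero,
      filter_eq_empty_iff, Bool.not_eq_true, Set.mem_union] at hx ⊢
    exact hx.imp id le_of_lt
  have hqA : (q : ℝ) * #A ≤ 2 * L := calc
    (q : ℝ) * #A ≤ L / D * (2 * D) := by
      gcongr
      exact hqLD ▸ min_le_right _ _
    _ = 2 * L := by field_simp
  have he : 1 ≤ exp 1 := one_le_exp zero_le_one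
  calc _ ≤ _ := measureReal_mono hsub
    _ ≤ _ := measureReal_union_le _ _
    _ ≤ _ := by
      gcongr
      · rw [measureReal_bernoulliPi_forall_false, hqLD]
        exact one_sub_min_div_pow_le_exp_neg hL hD hDA
      · refine (measureReal_bernoulliPi_le_card_filter_le hq A _).trans (exp_le_exp.2 ?_)
        nlinarith

end BernoulliPi

/-- Probabilistic sparsification: if every `ℓ ∈ B_D` is contained in between `D` and
`2D` of the sets `S i`, and each set is retained independently with probability
`p = min 1 (ln(2k)/D)`, then with positive probability every `ℓ ∈ B_D` simultaneously
retains at least one and at most `2e·ln(2k)` containing sets. -/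
theorem stmt_12 (B ι : Type*) [Fintype ι] (k k' D : ℕ)
    (hk : 1 ≤ k) (hD : 1 ≤ D)
    (BD : Finset B) (hBD : BD.card = k') (hk' : k' ≤ k)
    (S : ι → Finset B)
    (hdeg : ∀ ℓ ∈ BD,
      D ≤ (Finset.univ.filter (fun i : ι => ℓ ∈ S i)).card ∧
      (Finset.univ.filter (fun i : ι => ℓ ∈ S i)).card ≤ 2 * D)
    (p : ℝ≥0∞) (hp : p = ENNReal.ofReal (min 1 (Real.log (2 * k) / D)))
    (hp1 : p ≤ 1) :
    0 < (Measure.pi (fun _ : ι => ((PMF.bernoulli p.toNNReal (by simpa using ENNReal.toNNReal_mono ENNReal.one_ne_top hp1)).toMeasure)))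
        {f : ι → Bool | ∀ ℓ ∈ BD,
          (1 ≤ (Finset.univ.filter (fun i : ι => f i = true ∧ ℓ ∈ S i)).card) ∧
          ((Finset.univ.filter (fun i : ι => f i = true ∧ ℓ ∈ S i)).card : ℝ) ≤
            2 * Real.exp 1 * Real.log (2 * k)} := by
  set L := Real.log (2 * k)
  have hk0 : (1 : ℝ) ≤ k := by exact_mod_cast hk
  have hD0 : (0 : ℝ) < D := by exact_mod_cast hD
  have hL : 0 ≤ L := log_nonneg (by linarith)
  have hq : (p.toNNReal : ℝ) = min 1 (L / D) := by
    rw [ENNReal.coe_toNNReal_eq_toReal, hp, ENNReal.toReal_ofReal (by positivity)]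
  refine measure_setOf_forall_pos_of_card_mul_lt_one (c := exp (-L) + exp (-(2 * L)))
    (fun ℓ hℓ => ?_) ?_
  · have hfilter (f : ι → Bool) : univ.filter (fun i => f i = true ∧ ℓ ∈ S i) =
        {i ∈ univ.filter (fun i => ℓ ∈ S i) | f i = true} := by
      ext; simp [and_comm]
    simp only [hfilter]
    exact measureReal_bernoulliPi_card_filter_not_mem_le _ _ hL hD0 hq
      (by exact_mod_cast (hdeg ℓ hℓ).1) (by exact_mod_cast (hdeg ℓ hℓ).2)
  · have hexpL : exp (-L) = (2 * k : ℝ)⁻¹ := by rw [exp_neg, exp_log (by positivity)]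
    have hexp2L : exp (-(2 * L)) = (2 * k : ℝ)⁻¹ ^ 2 := by
      rw [← hexpL, ← exp_nat_mul]; ring_nf
    calc #BD * (exp (-L) + exp (-(2 * L))) ≤ k * ((2 * k : ℝ)⁻¹ + (2 * k : ℝ)⁻¹ ^ 2) := by
          rw [hexpL, hexp2L, hBD]
          gcongr
      _ = 1 / 2 + (4 * k : ℝ)⁻¹ := by field_simp; ring
      _ < 1 := by
          have : (4 * k : ℝ)⁻¹ ≤ 4⁻¹ := by gcongr; linarith
          linarith
end
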